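/- Let μ be the bracket on ℝ⁶ given by μ(e₁,e₃) = e₅, μ(e₄,e₂) = e₅, μ(e₁,e₄) = e₆, μ(e₂,e₃) = e₆, and for a,b ∈ ℝ set D(a,b) = diag(a,a,b,b,a+b,a+b). Then D(a,b) is a symmetric derivation of μ for all a,b, and the linear map A with Ae₁ = e₄, Ae₂ = e₃, Ae₃ = e₂, Ae₄ = e₁, Ae₅ = e₅, Ae₆ = −e₆ is an orthogonal automorphism of μ satisfying A·D(a,b)·A⁻¹ = D(b,a). -/
import Mathlib


open Matrix

/-- The bracket on ℝ⁶ given by μ(e₁,e₃) = e₅, μ(e₄,e₂) = e₅, μ(e₁,e₄) = e₆,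
μ(e₂,e₃) = e₆ (bilinear extension); this is the nilsoliton μ₂₈ = (0,0,0,0,13+42,14+23). -/
def mu28 (x y : Fin 6 → ℝ) : Fin 6 → ℝ :=
  ![0, 0, 0, 0,
    (x 0 * y 2 - x 2 * y 0) + (x 3 * y 1 - x 1 * y 3),
    (x 0 * y 3 - x 3 * y 0) + (x 1 * y 2 - x 2 * y 1)]

/-- `D` is a derivation of the bracket `mu28`. -/
def IsDerivMu28 (D : Matrix (Fin 6) (Fin 6) ℝ) : Prop :=
  ∀ x y : Fin 6 → ℝ, D.mulVec (mu28 x y) = mu28 (D.mulVec x) y + mu28 x (D.mulVec y)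

/-- `g` is an automorphism of the bracket `mu28`. -/
def IsAutoMu28 (g : Matrix (Fin 6) (Fin 6) ℝ) : Prop :=
  IsUnit g ∧ ∀ x y : Fin 6 → ℝ, g.mulVec (mu28 x y) = mu28 (g.mulVec x) (g.mulVec y)

/-- D(a,b) = diag(a,a,b,b,a+b,a+b). -/
def D28 (a b : ℝ) : Matrix (Fin 6) (Fin 6) ℝ :=
  Matrix.diagonal ![a, a, b, b, a + b, a + b]

/-- The map A with Ae₁ = e₄, Ae₂ = e₃, Ae₃ = e₂, Ae₄ = e₁, Ae₅ = e₅, Ae₆ = −e₆. -/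
def A28 : Matrix (Fin 6) (Fin 6) ℝ :=
  !![0, 0, 0, 1, 0, 0;
     0, 0, 1, 0, 0, 0;
     0, 1, 0, 0, 0, 0;
     1, 0, 0, 0, 0, 0;
     0, 0, 0, 0, 1, 0;
     0, 0, 0, 0, 0, -1]

private lemma fs2 : Fin.succ (2 : Fin 5) = 3 := rfl
private lemma fs3 : Fin.succ (3 : Fin 5) = 4 := rfl
private lemma fs4 : Fin.succ (4 : Fin 5) = 5 := rfl
private lemma c52 {α} (x : α) (u : Fin 5 → α) : Matrix.vecCons x u 2 = u 1 := rfl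
private lemma c53 {α} (x : α) (u : Fin 5 → α) : Matrix.vecCons x u 3 = u 2 := rfl
private lemma c54 {α} (x : α) (u : Fin 5 → α) : Matrix.vecCons x u 4 = u 3 := rfl
private lemma c55 {α} (x : α) (u : Fin 5 → α) : Matrix.vecCons x u 5 = u 4 := rfl
private lemma c42 {α} (x : α) (u : Fin 4 → α) : Matrix.vecCons x u 2 = u 1 := rfl
private lemma c43 {α} (x : α) (u : Fin 4 → α) : Matrix.vecCons x u 3 = u 2 := rfl
private lemma c44 {α} (x : α) (u : Fin 4 → α) : Matrix.vecCons x u 4 = u 3 := rfl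
private lemma c32 {α} (x : α) (u : Fin 3 → α) : Matrix.vecCons x u 2 = u 1 := rfl
private lemma c33 {α} (x : α) (u : Fin 3 → α) : Matrix.vecCons x u 3 = u 2 := rfl
private lemma c22 {α} (x : α) (u : Fin 2 → α) : Matrix.vecCons x u 2 = u 1 := rfl

set_option maxHeartbeats 2000000 in
theorem stmt15 :
    (∀ a b : ℝ, (D28 a b).IsSymm ∧ IsDerivMu28 (D28 a b)) ∧
    A28 * A28ᵀ = 1 ∧ IsAutoMu28 A28 ∧
    (∀ a b : ℝ, A28 * D28 a b * A28⁻¹ = D28 b a) := by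
  have hAA : A28 * A28 = 1 := by
    ext i j
    fin_cases i <;> fin_cases j <;>
      simp [A28, Matrix.mul_apply, Fin.sum_univ_succ, fs2, fs3, fs4, Matrix.vecHead, Matrix.vecTail, c52,c53,c54,c55,c42,c43,c44,c32,c33,c22]
  have hT : A28ᵀ = A28 := by
    ext i j
    fin_cases i <;> fin_cases j <;>
      simp [A28, fs2, fs3, fs4, Matrix.vecHead, Matrix.vecTail, c52,c53,c54,c55,c42,c43,c44,c32,c33,c22]
  have hinv : A28⁻¹ = A28 := Matrix.inv_eq_right_inv hAA
  refine ⟨?_, by rw [hT]; exact hAA, ⟨⟨⟨A28, A28, hAA, hAA⟩, rfl⟩, ?_⟩, ?_⟩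
  · intro a b
    constructor
    · ext i j
      fin_cases i <;> fin_cases j <;>
        simp [D28, Matrix.diagonal, fs2, fs3, fs4, Matrix.vecHead, Matrix.vecTail, c52,c53,c54,c55,c42,c43,c44,c32,c33,c22]
    · intro x y
      funext i
      fin_cases i <;>
        simp [mu28, D28, Matrix.mulVec, dotProduct, Fin.sum_univ_succ,
          Matrix.diagonal, fs2, fs3, fs4, Matrix.vecHead, Matrix.vecTail, c52,c53,c54,c55,c42,c43,c44,c32,c33,c22] <;> ring
  · intro x y
    funext i
    fin_cases i <;>
      simp [mu28, A28, Matrix.mulVec, dotProduct, Fin.sum_univ_succ,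
        fs2, fs3, fs4, Matrix.vecHead, Matrix.vecTail, c52,c53,c54,c55,c42,c43,c44,c32,c33,c22] <;> ring
  · intro a b
    rw [hinv]
    ext i j
    fin_cases i <;> fin_cases j <;>
      simp [A28, D28, Matrix.mul_apply, Matrix.diagonal, Fin.sum_univ_succ,
        fs2, fs3, fs4, Matrix.vecHead, Matrix.vecTail, c52,c53,c54,c55,c42,c43,c44,c32,c33,c22] <;> ring
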